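/- arXiv:2207.09596 — 3 statements merged into one kernel-verified Lean document; each statement's English description precedes it below -/
import Mathlib

section
/- Fix δ ∈ [0,1/2). Let (f_j)_{j ≥ 0} be smooth functions ℝ^d → ℝ, each with all partial derivatives bounded, and with f₀(x) ≥ 0 for all x. Let (f_N)_{N ≥ 1} be a family of smooth functions ℝ^d → ℝ such that for every J ∈ ℕ and every multi-index α there is C > 0 with |∂^α (f_N − Σ_{j=0}^{J−1} N^{−j} f_j)(x)| ≤ C N^{−J} for all x ∈ ℝ^d and N ≥ 1. Then the family (N^{2δ} f_N) belongs to S_δ(m) for the δ-order function m_N := N^{2δ} f₀ + 1; that is, for every multi-index α there is C_α > 0 with |∂^α (N^{2δ} f_N)(x)| ≤ C_α N^{δ|α|} (N^{2δ} f₀(x) + 1) for all x ∈ ℝ^d and N ≥ 1. -/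
/-- The partial derivative in the `i`-th coordinate direction. -/
noncomputable def pd {d : ℕ} {E : Type*} [NormedAddCommGroup E] [NormedSpace ℝ E]
    (i : Fin d) (f : (Fin d → ℝ) → E) : (Fin d → ℝ) → E :=
  fun x => fderiv ℝ f x (Pi.single i 1)

/-- The multi-index partial derivative `∂^α`. -/
noncomputable def md {d : ℕ} {E : Type*} [NormedAddCommGroup E] [NormedSpace ℝ E]
    (α : Fin d → ℕ) (f : (Fin d → ℝ) → E) : (Fin d → ℝ) → E :=
  ((List.ofFn fun i : Fin d => (pd i)^[α i]).foldr (· ∘ ·) id) f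

section Aux
variable {d : ℕ}

lemma pd_contDiff {i : Fin d} {f : (Fin d → ℝ) → ℝ} (hf : ContDiff ℝ (⊤ : ℕ∞) f) :
    ContDiff ℝ (⊤ : ℕ∞) (pd i f) :=
  (hf.fderiv_right (by simp)).clm_apply contDiff_const

lemma pd_iter_contDiff {i : Fin d} {f : (Fin d → ℝ) → ℝ} (hf : ContDiff ℝ (⊤ : ℕ∞) f) (k : ℕ) :
    ContDiff ℝ (⊤ : ℕ∞) ((pd i)^[k] f) := by
  induction k with
  | zero => simpa using hf
  | succ n ih => rw [Function.iterate_succ_apply']; exact pd_contDiff ih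

lemma pd_lin {i : Fin d} {u v : (Fin d → ℝ) → ℝ} (hu : ContDiff ℝ (⊤ : ℕ∞) u)
    (hv : ContDiff ℝ (⊤ : ℕ∞) v) (a b : ℝ) :
    pd i (fun y => a * u y + b * v y) = fun x => a * pd i u x + b * pd i v x := by
  funext x
  have hu' := (hu.differentiable (by simp)).differentiableAt (x := x)
  have hv' := (hv.differentiable (by simp)).differentiableAt (x := x)
  have : fderiv ℝ (fun y => a * u y + b * v y) x
      = a • fderiv ℝ u x + b • fderiv ℝ v x := by
    rw [fderiv_fun_add ((hu'.const_mul a)) ((hv'.const_mul b)),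
      fderiv_const_mul hu', fderiv_const_mul hv']
  simp [pd, this]

lemma pd_iter_lin {i : Fin d} {u v : (Fin d → ℝ) → ℝ} (hu : ContDiff ℝ (⊤ : ℕ∞) u)
    (hv : ContDiff ℝ (⊤ : ℕ∞) v) (a b : ℝ) (k : ℕ) :
    (pd i)^[k] (fun y => a * u y + b * v y)
      = fun x => a * (pd i)^[k] u x + b * (pd i)^[k] v x := by
  induction k with
  | zero => simp
  | succ n ih =>
      rw [Function.iterate_succ_apply', ih, Function.iterate_succ_apply',
        Function.iterate_succ_apply',
        pd_lin (pd_iter_contDiff hu n) (pd_iter_contDiff hv n)]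

lemma mdl_contDiff (l : List (Fin d)) (α : Fin d → ℕ) {u : (Fin d → ℝ) → ℝ}
    (hu : ContDiff ℝ (⊤ : ℕ∞) u) :
    ContDiff ℝ (⊤ : ℕ∞) (((l.map fun i => (pd i)^[α i]).foldr (· ∘ ·) id) u) := by
  induction l generalizing u with
  | nil => simpa using hu
  | cons i l ih => exact pd_iter_contDiff (ih hu) (α i)

lemma mdl_lin (l : List (Fin d)) (α : Fin d → ℕ) {u v : (Fin d → ℝ) → ℝ}
    (hu : ContDiff ℝ (⊤ : ℕ∞) u) (hv : ContDiff ℝ (⊤ : ℕ∞) v) (a b : ℝ) :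
    ((l.map fun i => (pd i)^[α i]).foldr (· ∘ ·) id) (fun y => a * u y + b * v y)
      = fun x => a * ((l.map fun i => (pd i)^[α i]).foldr (· ∘ ·) id) u x
          + b * ((l.map fun i => (pd i)^[α i]).foldr (· ∘ ·) id) v x := by
  induction l generalizing u v with
  | nil => simp
  | cons i l ih =>
      simp only [List.map_cons, List.foldr_cons, Function.comp_apply]
      rw [ih hu hv, pd_iter_lin (mdl_contDiff l α hu) (mdl_contDiff l α hv) a b (α i)]

lemma md_eq_foldr (α : Fin d → ℕ) (f : (Fin d → ℝ) → ℝ) :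
    md α f = (((List.finRange d).map fun i => (pd i)^[α i]).foldr (· ∘ ·) id) f := by
  rw [md, List.ofFn_eq_map]

lemma md_lin (α : Fin d → ℕ) {u v : (Fin d → ℝ) → ℝ} (hu : ContDiff ℝ (⊤ : ℕ∞) u)
    (hv : ContDiff ℝ (⊤ : ℕ∞) v) (a b : ℝ) :
    md α (fun y => a * u y + b * v y) = fun x => a * md α u x + b * md α v x := by
  rw [md_eq_foldr, md_eq_foldr, md_eq_foldr, mdl_lin _ α hu hv]

lemma foldr_comp_id {X : Type*} (l : List (X → X)) (b : X → X) (h : ∀ g ∈ l, g = id) :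
    l.foldr (· ∘ ·) b = b := by
  induction l with
  | nil => rfl
  | cons g l ih =>
      rw [List.foldr_cons, h g (by simp), ih fun g hg => h g (by simp [hg])]
      rfl

lemma md_single (i : Fin d) (k : ℕ) (f : (Fin d → ℝ) → ℝ) :
    md (Pi.single i k) f = (pd i)^[k] f := by
  rw [md_eq_foldr]
  obtain ⟨s, t, hst⟩ := List.append_of_mem (List.mem_finRange i)
  have hnd : (List.finRange d).Nodup := List.nodup_finRange d
  rw [hst] at hnd
  have his : i ∉ s := fun h => (List.nodup_append.1 hnd).2.2 i h i (by simp) rfl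
  have hit : i ∉ t := by
    have := (List.nodup_append.1 hnd).2.1
    exact (List.nodup_cons.1 this).1
  rw [hst, List.map_append, List.foldr_append, List.map_cons, List.foldr_cons]
  have h1 : ((t.map fun j => ((pd j : ((Fin d → ℝ) → ℝ) → (Fin d → ℝ) → ℝ))^[(Pi.single i k : Fin d → ℕ) j]).foldr
      (· ∘ ·) id) = id := by
    apply foldr_comp_id
    intro g hg
    obtain ⟨j, hj, rfl⟩ := List.mem_map.1 hg
    rw [Pi.single_eq_of_ne (show j ≠ i by rintro rfl; exact hit hj), Function.iterate_zero]
  rw [h1, foldr_comp_id]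
  · rw [Pi.single_eq_same]; rfl
  · intro g hg
    obtain ⟨j, hj, rfl⟩ := List.mem_map.1 hg
    rw [Pi.single_eq_of_ne (show j ≠ i by rintro rfl; exact his hj), Function.iterate_zero]

lemma md_zero_index (α : Fin d → ℕ) (hα : ∀ i, α i = 0) (f : (Fin d → ℝ) → ℝ) :
    md α f = f := by
  rw [md_eq_foldr, foldr_comp_id]
  · rfl
  · intro g hg
    obtain ⟨j, hj, rfl⟩ := List.mem_map.1 hg
    rw [hα j, Function.iterate_zero]


/-- If `h ≥ 0` is C² with `|h''| ≤ K`, then `h'(0)² ≤ 4 K h(0)`. -/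
lemma sq_deriv_le (h : ℝ → ℝ) (hd : Differentiable ℝ h) (hd2 : Differentiable ℝ (deriv h))
    (hc2 : Continuous (deriv h)) (hpos : ∀ t, 0 ≤ h t) (K : ℝ) (hK : 0 < K)
    (hbd : ∀ t, |deriv (deriv h) t| ≤ K) : (deriv h 0) ^ 2 ≤ 4 * K * h 0 := by
  have hlip : LipschitzWith K.toNNReal (deriv h) := by
    apply lipschitzWith_of_nnnorm_deriv_le hd2
    intro x
    rw [← NNReal.coe_le_coe]
    simpa [Real.coe_toNNReal _ hK.le] using hbd x
  have key : ∀ t : ℝ, 0 ≤ h 0 + t * deriv h 0 + K * t ^ 2 := by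
    intro t
    have hftc : ∫ s in (0:ℝ)..t, deriv h s = h t - h 0 := by
      apply intervalIntegral.integral_deriv_eq_sub (fun x _ => hd x)
      exact hc2.intervalIntegrable _ _
    have hsub : ∫ s in (0:ℝ)..t, (deriv h s - deriv h 0)
        = h t - h 0 - t * deriv h 0 := by
      rw [intervalIntegral.integral_sub (hc2.intervalIntegrable _ _)
        intervalIntegrable_const, hftc, intervalIntegral.integral_const]
      simp [smul_eq_mul]
    have hb : |∫ s in (0:ℝ)..t, (deriv h s - deriv h 0)| ≤ K * |t| * |t - 0| := by
      rw [← Real.norm_eq_abs]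
      apply intervalIntegral.norm_integral_le_of_norm_le_const
      intro s hs
      have h1 : |s| ≤ |t| := by
        rcases Set.mem_uIoc.1 hs with ⟨h1, h2⟩ | ⟨h1, h2⟩
        · rw [abs_of_pos h1, abs_of_pos (h1.trans_le h2)]; exact h2
        · rw [abs_of_nonpos h2, abs_of_neg (h1.trans_le h2)]; linarith
      have := hlip.dist_le_mul s 0
      rw [Real.dist_eq, Real.dist_eq, sub_zero, Real.coe_toNNReal _ hK.le] at this
      calc ‖deriv h s - deriv h 0‖ ≤ K * |s| := this
        _ ≤ K * |t| := by nlinarith [abs_nonneg s]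
    rw [hsub, sub_zero] at hb
    have hht := hpos t
    have h2 : |h t - h 0 - t * deriv h 0| ≤ K * t ^ 2 := by
      calc |h t - h 0 - t * deriv h 0| ≤ K * |t| * |t| := hb
        _ = K * t ^ 2 := by rw [mul_assoc, ← abs_mul, ← sq, abs_sq]
    have := abs_le.1 h2
    nlinarith
  have hk := key (-(deriv h 0) / (2 * K))
  have h2K : (0:ℝ) < 2 * K := by linarith
  have hne : (2 * K) ≠ 0 := ne_of_gt h2K
  field_simp at hk
  nlinarith [sq_nonneg (deriv h 0), mul_pos hK hK]

lemma hasDerivAt_comp_line (u : (Fin d → ℝ) → ℝ) (hu : ContDiff ℝ (⊤ : ℕ∞) u)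
    (x : Fin d → ℝ) (i : Fin d) (t : ℝ) :
    HasDerivAt (fun s : ℝ => u (x + s • (Pi.single i 1 : Fin d → ℝ)))
      (pd i u (x + t • (Pi.single i 1 : Fin d → ℝ))) t := by
  have hγ : HasDerivAt (fun s : ℝ => x + s • (Pi.single i 1 : Fin d → ℝ))
      (Pi.single i 1) t := by
    simpa using ((hasDerivAt_id t).smul_const (Pi.single i 1 : Fin d → ℝ)).const_add x
  have hdu := (hu.differentiable (by simp)).differentiableAt
    (x := x + t • (Pi.single i 1 : Fin d → ℝ))
  exact hdu.hasFDerivAt.comp_hasDerivAt t hγ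


lemma sq_pd_le (g : (Fin d → ℝ) → ℝ) (hg : ContDiff ℝ (⊤ : ℕ∞) g) (hpos : ∀ x, 0 ≤ g x)
    (i : Fin d) (K : ℝ) (hK : 0 < K) (hbd : ∀ x, |pd i (pd i g) x| ≤ K)
    (x : Fin d → ℝ) : (pd i g x) ^ 2 ≤ 4 * K * g x := by
  set h : ℝ → ℝ := fun s => g (x + s • (Pi.single i 1 : Fin d → ℝ)) with hh
  have hd : Differentiable ℝ h := fun t => (hasDerivAt_comp_line g hg x i t).differentiableAt
  have hderiv : deriv h = fun t => pd i g (x + t • (Pi.single i 1 : Fin d → ℝ)) :=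
    funext fun t => (hasDerivAt_comp_line g hg x i t).deriv
  have hd2 : Differentiable ℝ (deriv h) := by
    rw [hderiv]
    exact fun t => (hasDerivAt_comp_line (pd i g) (pd_contDiff hg) x i t).differentiableAt
  have hderiv2 : deriv (deriv h) = fun t => pd i (pd i g) (x + t • (Pi.single i 1 : Fin d → ℝ)) := by
    rw [hderiv]
    exact funext fun t => (hasDerivAt_comp_line (pd i g) (pd_contDiff hg) x i t).deriv
  have hc2 : Continuous (deriv h) := by
    rw [hderiv]
    exact (pd_contDiff hg).continuous.comp (by continuity)
  have hmain := sq_deriv_le h hd hd2 hc2 (fun t => hpos _) K hK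
    (by rw [hderiv2]; intro t; exact hbd _)
  rw [hderiv] at hmain
  simpa [hh] using hmain


lemma sqrt_le_add_one {u : ℝ} (hu : 0 ≤ u) : Real.sqrt u ≤ u + 1 := by
  nlinarith [Real.sq_sqrt hu, sq_nonneg (Real.sqrt u - 1), Real.sqrt_nonneg u]


end Aux

/-- If `f_N ∼ Σ N^{-j} f_j` with each `f_j` smooth with bounded derivatives and `f₀ ≥ 0`,
then `N^{2δ} f_N ∈ S_δ(m)` for the `δ`-order function `m_N = N^{2δ} f₀ + 1`. -/
theorem stmt2 (d : ℕ) (δ : ℝ) (hδ0 : 0 ≤ δ) (hδ1 : δ < 1 / 2)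
    (fj : ℕ → (Fin d → ℝ) → ℝ)
    (hfj_smooth : ∀ j, ContDiff ℝ (⊤ : ℕ∞) (fj j))
    (hfj_bdd : ∀ j, ∀ α : Fin d → ℕ, ∃ K : ℝ, ∀ x, |md α (fj j) x| ≤ K)
    (hf0 : ∀ x, 0 ≤ fj 0 x)
    (f : ℝ → (Fin d → ℝ) → ℝ)
    (hf_smooth : ∀ N : ℝ, 1 ≤ N → ContDiff ℝ (⊤ : ℕ∞) (f N))
    (hasymp : ∀ (J : ℕ) (α : Fin d → ℕ), ∃ C > 0, ∀ N : ℝ, 1 ≤ N → ∀ x,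
      |md α (fun y => f N y - ∑ j ∈ Finset.range J, N ^ (-(j : ℝ)) * fj j y) x|
        ≤ C * N ^ (-(J : ℝ))) :
    ∀ α : Fin d → ℕ, ∃ C > 0, ∀ N : ℝ, 1 ≤ N → ∀ x,
      |md α (fun y => N ^ (2 * δ) * f N y) x|
        ≤ C * N ^ (δ * (∑ i, α i)) * (N ^ (2 * δ) * fj 0 x + 1) := by
  intro α
  obtain ⟨C1, hC1pos, hC1⟩ := hasymp 1 α
  have h0s := hfj_smooth 0
  -- difference bound at order 1
  have hC1' : ∀ N : ℝ, 1 ≤ N → ∀ x,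
      |md α (f N) x - md α (fj 0) x| ≤ C1 * N ^ (-(1:ℝ)) := by
    intro N hN x
    have hfn := hf_smooth N hN
    have he : (fun y => f N y - ∑ j ∈ Finset.range 1, N ^ (-(j:ℝ)) * fj j y)
        = fun y => 1 * f N y + (-1) * fj 0 y := by
      funext y
      simp [Finset.sum_range_one]
      ring
    have h := hC1 N hN x
    rw [he, md_lin α hfn h0s 1 (-1)] at h
    simpa [sub_eq_add_neg] using h
  -- pull out the constant N^{2δ}
  have hmdc : ∀ N : ℝ, 1 ≤ N → ∀ x,
      md α (fun y => N ^ (2*δ) * f N y) x = N ^ (2*δ) * md α (f N) x := by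
    intro N hN x
    have he : (fun y => N ^ (2*δ) * f N y)
        = fun y => N ^ (2*δ) * f N y + 0 * f N y := by
      funext y; ring
    rw [he, md_lin α (hf_smooth N hN) (hf_smooth N hN)]
    ring
  by_cases hs0 : ∑ i, α i = 0
  · -- zeroth order
    have hα : ∀ i, α i = 0 := by
      intro i
      exact (Finset.sum_eq_zero_iff.1 hs0) i (Finset.mem_univ i)
    refine ⟨C1 + 1, by linarith, ?_⟩
    intro N hN x
    have hN0 : (0:ℝ) < N := lt_of_lt_of_le one_pos hN
    have hB : (0:ℝ) < N ^ (2*δ) := Real.rpow_pos_of_pos hN0 _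
    rw [hmdc N hN x, md_zero_index α hα, hs0]
    have h1 : |f N x - fj 0 x| ≤ C1 * N ^ (-(1:ℝ)) := by
      have := hC1' N hN x
      rwa [md_zero_index α hα, md_zero_index α hα] at this
    have h2 : |f N x| ≤ fj 0 x + C1 * N ^ (-(1:ℝ)) := by
      have := abs_sub_abs_le_abs_sub (f N x) (fj 0 x)
      rw [abs_of_nonneg (hf0 x)] at this
      linarith [this, h1]
    have hBN : N ^ (2*δ) * N ^ (-(1:ℝ)) ≤ 1 := by
      rw [← Real.rpow_add hN0]
      exact Real.rpow_le_one_of_one_le_of_nonpos hN (by linarith)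
    have hNneg : (0:ℝ) < N ^ (-(1:ℝ)) := Real.rpow_pos_of_pos hN0 _
    have hft : 0 ≤ N ^ (2*δ) * fj 0 x := mul_nonneg hB.le (hf0 x)
    rw [abs_mul, abs_of_pos hB]
    simp only [Nat.cast_zero, mul_zero, Real.rpow_zero, mul_one]
    nlinarith [mul_le_mul_of_nonneg_left h2 hB.le]
  by_cases hs1 : ∑ i, α i = 1
  · -- first order: use the gradient estimate
    obtain ⟨i, hi⟩ : ∃ i, α i ≠ 0 := by
      by_contra hcon
      push_neg at hcon
      exact hs0 (Finset.sum_eq_zero fun i _ => hcon i)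
    have hαi : α i = 1 := by
      have hle : α i ≤ ∑ j, α j :=
        Finset.single_le_sum (fun j _ => Nat.zero_le _) (Finset.mem_univ i)
      omega
    have hα : α = Pi.single i 1 := by
      funext j
      rcases eq_or_ne j i with rfl | hj
      · rw [Pi.single_eq_same, hαi]
      · rw [Pi.single_eq_of_ne hj]
        have := Finset.add_sum_erase Finset.univ α (Finset.mem_univ i)
        have hz : ∑ k ∈ Finset.univ.erase i, α k = 0 := by omega
        exact (Finset.sum_eq_zero_iff.1 hz) j (by simp [hj])
    have hmd1 : ∀ u : (Fin d → ℝ) → ℝ, md α u = pd i u := by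
      intro u
      rw [hα, md_single, Function.iterate_one]
    obtain ⟨K2, hK2⟩ := hfj_bdd 0 (Pi.single i 2)
    set K := max K2 1 with hKdef
    have hK : (0:ℝ) < K := lt_of_lt_of_le one_pos (le_max_right _ _)
    have hbd2 : ∀ x, |pd i (pd i (fj 0)) x| ≤ K := by
      intro x
      have h := hK2 x
      rw [md_single] at h
      have : (pd i)^[2] (fj 0) = pd i (pd i (fj 0)) := by
        rw [show (2:ℕ) = 1 + 1 from rfl, Function.iterate_succ_apply', Function.iterate_one]
      rw [this] at h
      exact le_trans h (le_max_left _ _)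
    refine ⟨Real.sqrt (4*K) + C1, by positivity, ?_⟩
    intro N hN x
    have hN0 : (0:ℝ) < N := lt_of_lt_of_le one_pos hN
    have hA : (0:ℝ) < N ^ δ := Real.rpow_pos_of_pos hN0 _
    have hA1 : (1:ℝ) ≤ N ^ δ := Real.one_le_rpow hN hδ0
    have hB : (0:ℝ) < N ^ (2*δ) := Real.rpow_pos_of_pos hN0 _
    have ht : (0:ℝ) ≤ fj 0 x := hf0 x
    -- gradient bound
    have hgrad : (pd i (fj 0) x) ^ 2 ≤ 4 * K * fj 0 x :=
      sq_pd_le (fj 0) h0s hf0 i K hK hbd2 x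
    have hD : |pd i (fj 0) x| ≤ Real.sqrt (4*K) * Real.sqrt (fj 0 x) := by
      rw [← Real.sqrt_mul (by positivity)]
      exact Real.abs_le_sqrt (by nlinarith)
    -- rpow algebra
    have hBA : N ^ (2*δ) = (N ^ δ) ^ 2 := by
      rw [show (2*δ) = δ*2 by ring, Real.rpow_mul hN0.le]
      norm_num
    have f3 : N ^ (2*δ) * Real.sqrt (fj 0 x)
        = N ^ δ * Real.sqrt (N ^ (2*δ) * fj 0 x) := by
      rw [Real.sqrt_mul hB.le, hBA, Real.sqrt_sq hA.le]
      ring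
    have f4 : Real.sqrt (N ^ (2*δ) * fj 0 x) ≤ N ^ (2*δ) * fj 0 x + 1 :=
      sqrt_le_add_one (by positivity)
    have f5 : N ^ (2*δ) * N ^ (-(1:ℝ)) ≤ 1 := by
      rw [← Real.rpow_add hN0]
      exact Real.rpow_le_one_of_one_le_of_nonpos hN (by linarith)
    have f1 : |pd i (f N) x| ≤ |pd i (fj 0) x| + C1 * N ^ (-(1:ℝ)) := by
      have h := hC1' N hN x
      rw [hmd1 (f N), hmd1 (fj 0)] at h
      have habs := abs_sub_abs_le_abs_sub (pd i (f N) x) (pd i (fj 0) x)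
      linarith
    have hsq : (0:ℝ) ≤ Real.sqrt (4*K) := Real.sqrt_nonneg _
    have hNneg : (0:ℝ) < N ^ (-(1:ℝ)) := Real.rpow_pos_of_pos hN0 _
    rw [hmdc N hN x, hs1]
    simp only [Nat.cast_one, mul_one]
    rw [abs_mul, abs_of_pos hB, hmd1]
    have hmt : (0:ℝ) ≤ N ^ (2*δ) * fj 0 x + 1 := by positivity
    calc N ^ (2*δ) * |pd i (f N) x|
        ≤ N ^ (2*δ) * (|pd i (fj 0) x| + C1 * N ^ (-(1:ℝ))) :=
          mul_le_mul_of_nonneg_left f1 hB.le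
      _ = N ^ (2*δ) * |pd i (fj 0) x| + C1 * (N ^ (2*δ) * N ^ (-(1:ℝ))) := by ring
      _ ≤ N ^ (2*δ) * (Real.sqrt (4*K) * Real.sqrt (fj 0 x)) + C1 * 1 := by
          have h1 := mul_le_mul_of_nonneg_left hD hB.le
          have h2 := mul_le_mul_of_nonneg_left f5 hC1pos.le
          linarith
      _ = Real.sqrt (4*K) * (N ^ δ * Real.sqrt (N ^ (2*δ) * fj 0 x)) + C1 := by
          rw [show N ^ (2*δ) * (Real.sqrt (4*K) * Real.sqrt (fj 0 x))
            = Real.sqrt (4*K) * (N ^ (2*δ) * Real.sqrt (fj 0 x)) by ring, f3]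
          ring
      _ ≤ Real.sqrt (4*K) * (N ^ δ * (N ^ (2*δ) * fj 0 x + 1))
            + C1 * (N ^ δ * (N ^ (2*δ) * fj 0 x + 1)) := by
          have h1 : N ^ δ * Real.sqrt (N ^ (2*δ) * fj 0 x)
              ≤ N ^ δ * (N ^ (2*δ) * fj 0 x + 1) := mul_le_mul_of_nonneg_left f4 hA.le
          have h2 : (1:ℝ) ≤ N ^ δ * (N ^ (2*δ) * fj 0 x + 1) := by nlinarith
          nlinarith
      _ = (Real.sqrt (4*K) + C1) * N ^ δ * (N ^ (2*δ) * fj 0 x + 1) := by ring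
  · -- order ≥ 2
    have hs2 : 2 ≤ ∑ i, α i := by omega
    obtain ⟨K, hK⟩ := hfj_bdd 0 α
    have hK0 : 0 ≤ K := le_trans (abs_nonneg _) (hK 0)
    refine ⟨K + C1 + 1, by linarith, ?_⟩
    intro N hN x
    have hN0 : (0:ℝ) < N := lt_of_lt_of_le one_pos hN
    have hB : (0:ℝ) < N ^ (2*δ) := Real.rpow_pos_of_pos hN0 _
    have hS : (0:ℝ) < N ^ (δ * (∑ i, α i : ℕ)) := Real.rpow_pos_of_pos hN0 _
    have hexp : N ^ (2*δ) ≤ N ^ (δ * (∑ i, α i : ℕ)) := by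
      apply Real.rpow_le_rpow_of_exponent_le hN
      have : (2:ℝ) ≤ (∑ i, α i : ℕ) := by exact_mod_cast hs2
      nlinarith
    have hNneg : (0:ℝ) < N ^ (-(1:ℝ)) := Real.rpow_pos_of_pos hN0 _
    have hNneg1 : N ^ (-(1:ℝ)) ≤ 1 :=
      Real.rpow_le_one_of_one_le_of_nonpos hN (by linarith)
    have h1 : |md α (f N) x| ≤ K + C1 := by
      have h := hC1' N hN x
      have := abs_sub_abs_le_abs_sub (md α (f N) x) (md α (fj 0) x)
      have hKx := hK x
      nlinarith
    rw [hmdc N hN x, abs_mul, abs_of_pos hB]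
    have hft : 0 ≤ N ^ (2*δ) * fj 0 x := mul_nonneg hB.le (hf0 x)
    calc N ^ (2*δ) * |md α (f N) x| ≤ N ^ (2*δ) * (K + C1) :=
          mul_le_mul_of_nonneg_left h1 hB.le
      _ ≤ N ^ (δ * (∑ i, α i : ℕ)) * (K + C1) := by nlinarith
      _ ≤ (K + C1 + 1) * N ^ (δ * (∑ i, α i : ℕ)) * (N ^ (2*δ) * fj 0 x + 1) := by
          nlinarith [mul_nonneg (mul_nonneg (show (0:ℝ) ≤ K + C1 + 1 by linarith) hS.le) hft,
            hS.le]
end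

section
/- Fix δ ∈ [0,1/2), let m = (m_N) be a δ-order function on ℝ^d with m_N(x) ≥ 1 for all x and N, and let f = (f_N) ∈ S_δ(m) be real-valued with f_N(x) ≥ 0 for all x and N. Assume there is C₀ > 0 with f_N(x) ≥ m_N(x)/C₀ − C₀ for all x and N. Then for every R > 0 and every multi-index α there exists C_α > 0 such that for all N ≥ 1, all x ∈ ℝ^d, and all z ∈ ℂ with |Re z| ≤ R and 0 < |Im z| ≤ 1, one has |∂_x^α ((z − f_N(x))^{−1})| ≤ C_α |Im z|^{−1−|α|} N^{δ|α|} m_N(x)^{−1}. -/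
namespace Stmt9Aux

variable {d : ℕ} {E : Type*} [NormedAddCommGroup E] [NormedSpace ℝ E]

/-- Iterated partial derivative along a list of directions, head outermost. -/
noncomputable def pdl : List (Fin d) → ((Fin d → ℝ) → E) → ((Fin d → ℝ) → E)
  | [], g => g
  | i :: L, g => pd i (pdl L g)

@[simp] lemma pdl_nil (g : (Fin d → ℝ) → E) : pdl [] g = g := rfl

@[simp] lemma pdl_cons (i : Fin d) (L : List (Fin d)) (g : (Fin d → ℝ) → E) :
    pdl (i :: L) g = pd i (pdl L g) := rfl

lemma pdl_append (L₁ L₂ : List (Fin d)) (g : (Fin d → ℝ) → E) :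
    pdl (L₁ ++ L₂) g = pdl L₁ (pdl L₂ g) := by
  induction L₁ with
  | nil => rfl
  | cons a L ih => simp [ih]

lemma pdl_replicate (n : ℕ) (i : Fin d) (g : (Fin d → ℝ) → E) :
    pdl (List.replicate n i) g = (pd i)^[n] g := by
  induction n with
  | zero => rfl
  | succ n ih =>
    rw [List.replicate_succ, pdl_cons, ih, Function.iterate_succ_apply']

/-- The canonical sorted list attached to a multi-index. -/
def bigL (α : Fin d → ℕ) : List (Fin d) :=
  ((List.finRange d).map fun i => List.replicate (α i) i).flatten

lemma md_eq_pdl (α : Fin d → ℕ) (g : (Fin d → ℝ) → E) :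
    md α g = pdl (bigL α) g := by
  rw [md, List.ofFn_eq_map, bigL]
  induction (List.finRange d) with
  | nil => rfl
  | cons a l ih => simp [pdl_append, pdl_replicate, ih]

lemma bigL_length (α : Fin d → ℕ) : (bigL α).length = ∑ i, α i := by
  rw [bigL, List.length_flatten, List.map_map]
  have : (List.length ∘ fun i => List.replicate (α i) i) = α := by
    funext i; simp
  rw [this, ← List.ofFn_eq_map, List.sum_ofFn]

lemma bigL_sorted (α : Fin d → ℕ) : (bigL α).Pairwise (· ≤ ·) := by
  rw [bigL, List.pairwise_flatten]
  constructor
  · intro l hl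
    simp only [List.mem_map] at hl
    obtain ⟨i, -, rfl⟩ := hl
    rw [List.pairwise_replicate]
    right; exact le_refl i
  · refine List.Pairwise.map _ ?_ (List.pairwise_lt_finRange d)
    intro a b hab x hx y hy
    rw [List.eq_of_mem_replicate hx, List.eq_of_mem_replicate hy]
    exact le_of_lt hab

lemma flatten_update (i : Fin d) (β : Fin d → ℕ) (hβ : ∀ j, j < i → β j = 0) :
    ∀ (l : List (Fin d)), l.Pairwise (· < ·) → i ∈ l →
      ((l.map fun j => List.replicate (Function.update β i (β i + 1) j) j).flatten)
        = i :: (l.map fun j => List.replicate (β j) j).flatten := by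
  intro l hl hi
  induction l with
  | nil => simp at hi
  | cons a l ih =>
    rw [List.pairwise_cons] at hl
    rcases List.mem_cons.1 hi with rfl | hmem
    · have hmapeq : List.map (fun j => List.replicate (Function.update β i (β i + 1) j) j) l
          = List.map (fun j => List.replicate (β j) j) l :=
        List.map_congr_left fun j hj => by
          rw [Function.update_of_ne (ne_of_gt (hl.1 j hj))]
      simp only [List.map_cons, List.flatten_cons, Function.update_self,
        List.replicate_succ]
      rw [hmapeq]
      simp
    · have hai : a < i := hl.1 i hmem
      have h1 : Function.update β i (β i + 1) a = 0 := by
        rw [Function.update_of_ne (ne_of_lt hai)]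
        exact hβ a hai
      simp only [List.map_cons, List.flatten_cons, h1, hβ a hai, List.replicate_zero,
        List.nil_append]
      exact ih hl.2 hmem

lemma cnt_cons (i : Fin d) (B : List (Fin d)) :
    (fun j => (i :: B).count j) =
      Function.update (fun j => B.count j) i (B.count i + 1) := by
  funext j
  by_cases h : j = i
  · subst h; simp [List.count_cons, Function.update_self]
  · rw [Function.update_of_ne h]
    simp [List.count_cons, Ne.symm h]

lemma bigL_cnt (B : List (Fin d)) (hB : B.Pairwise (· ≤ ·)) :
    bigL (fun j => B.count j) = B := by
  induction B with
  | nil => simp [bigL]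
  | cons i B ih =>
    rw [List.pairwise_cons] at hB
    have h0 : ∀ j, j < i → B.count j = 0 := by
      intro j hj
      rw [List.count_eq_zero]
      intro hjB
      exact absurd (hB.1 j hjB) (not_le.2 hj)
    rw [cnt_cons, bigL, flatten_update i _ h0 (List.finRange d)
      (List.pairwise_lt_finRange d) (List.mem_finRange i)]
    exact congrArg (i :: ·) (ih hB.2)

lemma pdl_eq_md_of_sorted (B : List (Fin d)) (hB : B.Pairwise (· ≤ ·))
    (g : (Fin d → ℝ) → E) : pdl B g = md (fun j => B.count j) g := by
  rw [md_eq_pdl, bigL_cnt B hB]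

lemma sum_count (B : List (Fin d)) : (∑ i, B.count i) = B.length := by
  induction B with
  | nil => simp
  | cons a B ih => simp [List.count_cons, Finset.sum_add_distrib, ih]

end Stmt9Aux
namespace Stmt9Aux

section Calc

variable {d : ℕ} {x : Fin d → ℝ} {i : Fin d}

lemma pd_contDiff {E : Type*} [NormedAddCommGroup E] [NormedSpace ℝ E]
    {g : (Fin d → ℝ) → E} (hg : ContDiff ℝ (⊤ : ℕ∞) g) (i : Fin d) :
    ContDiff ℝ (⊤ : ℕ∞) (pd i g) :=
  (hg.fderiv_right (by simp)).clm_apply contDiff_const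

lemma pdl_contDiff {E : Type*} [NormedAddCommGroup E] [NormedSpace ℝ E]
    {g : (Fin d → ℝ) → E} (hg : ContDiff ℝ (⊤ : ℕ∞) g) (L : List (Fin d)) :
    ContDiff ℝ (⊤ : ℕ∞) (pdl L g) := by
  induction L with
  | nil => exact hg
  | cons a L ih => exact pd_contDiff ih a

lemma pd_eq {E : Type*} [NormedAddCommGroup E] [NormedSpace ℝ E]
    {g : (Fin d → ℝ) → E} {g' : (Fin d → ℝ) →L[ℝ] E}
    (h : HasFDerivAt g g' x) : pd i g x = g' (Pi.single i 1) := by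
  rw [pd, h.fderiv]

lemma diff_coe {F : (Fin d → ℝ) → ℝ} (hF : DifferentiableAt ℝ F x) :
    DifferentiableAt ℝ (fun y => (F y : ℂ)) x :=
  Complex.ofRealCLM.differentiableAt.comp x hF

lemma hasfd_coe {F : (Fin d → ℝ) → ℝ} (hF : DifferentiableAt ℝ F x) :
    HasFDerivAt (fun y => (F y : ℂ))
      (Complex.ofRealCLM.comp (fderiv ℝ F x)) x :=
  Complex.ofRealCLM.hasFDerivAt.comp x hF.hasFDerivAt

lemma pd_ofReal {F : (Fin d → ℝ) → ℝ} (hF : DifferentiableAt ℝ F x) :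
    pd i (fun y => (F y : ℂ)) x = ((pd i F x : ℝ) : ℂ) := by
  rw [pd_eq (hasfd_coe hF)]
  rfl

lemma pd_add {A B : (Fin d → ℝ) → ℂ} (hA : DifferentiableAt ℝ A x)
    (hB : DifferentiableAt ℝ B x) :
    pd i (fun y => A y + B y) x = pd i A x + pd i B x := by
  rw [pd, fderiv_fun_add hA hB]
  rfl

lemma pd_const_mul {B : (Fin d → ℝ) → ℂ} (c : ℂ) (hB : DifferentiableAt ℝ B x) :
    pd i (fun y => c * B y) x = c * pd i B x := by
  rw [pd, fderiv_const_mul hB c]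
  rfl

lemma pd_mul {A B : (Fin d → ℝ) → ℂ} (hA : DifferentiableAt ℝ A x)
    (hB : DifferentiableAt ℝ B x) :
    pd i (fun y => A y * B y) x = pd i A x * B x + A x * pd i B x := by
  rw [pd_eq (hA.hasFDerivAt.fun_mul hB.hasFDerivAt)]
  simp only [ContinuousLinearMap.add_apply, ContinuousLinearMap.smul_apply,
    smul_eq_mul]
  rw [pd, pd]
  ring

lemma diff_list_sum {β : Type*} (ts : List β) (g : β → (Fin d → ℝ) → ℂ)
    (h : ∀ t ∈ ts, DifferentiableAt ℝ (g t) x) :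
    DifferentiableAt ℝ (fun y => (ts.map fun t => g t y).sum) x := by
  induction ts with
  | nil => simpa using differentiableAt_const (0 : ℂ)
  | cons a ts ih =>
    simp only [List.map_cons, List.sum_cons]
    exact (h a (List.mem_cons_self)).add
      (ih fun t ht => h t (List.mem_cons_of_mem a ht))

lemma pd_list_sum {β : Type*} (ts : List β) (g : β → (Fin d → ℝ) → ℂ)
    (h : ∀ t ∈ ts, DifferentiableAt ℝ (g t) x) :
    pd i (fun y => (ts.map fun t => g t y).sum) x
      = (ts.map fun t => pd i (g t) x).sum := by
  induction ts with
  | nil =>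
    simp only [List.map_nil, List.sum_nil]
    rw [show (fun _ : Fin d → ℝ => (0:ℂ)) = fun _ => (0:ℂ) from rfl, pd]
    simp [fderiv_const]
  | cons a ts ih =>
    simp only [List.map_cons, List.sum_cons]
    rw [pd_add (h a (List.mem_cons_self))
      (diff_list_sum ts g fun t ht => h t (List.mem_cons_of_mem a ht)),
      ih fun t ht => h t (List.mem_cons_of_mem a ht)]

lemma pd_comp_hasDerivAt {F : (Fin d → ℝ) → ℝ} (hF : DifferentiableAt ℝ F x)
    {h₂ : ℂ → ℂ} {D : ℂ} (hh : HasDerivAt h₂ D ((F x : ℝ) : ℂ)) :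
    pd i (fun y => h₂ ((F y : ℝ) : ℂ)) x = D * ((pd i F x : ℝ) : ℂ) := by
  have hg := hasfd_coe hF
  have h3 : HasFDerivAt (fun y => h₂ ((F y : ℝ) : ℂ))
      (D • Complex.ofRealCLM.comp (fderiv ℝ F x)) x := hh.comp_hasFDerivAt x hg
  rw [pd_eq h3]
  simp only [ContinuousLinearMap.smul_apply]
  rw [pd]
  rfl

lemma pd_invpow {F : (Fin d → ℝ) → ℝ} (hF : DifferentiableAt ℝ F x)
    {z : ℂ} (hz : z - (F x : ℂ) ≠ 0) (k : ℕ) :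
    pd i (fun y => ((z - (F y : ℂ))⁻¹) ^ (k + 1)) x
      = ((k : ℂ) + 1) * ((z - (F x : ℂ))⁻¹) ^ (k + 2) * ((pd i F x : ℝ) : ℂ) := by
  have h1 : HasDerivAt (fun w : ℂ => z - w) (-1) ((F x : ℝ) : ℂ) := by
    simpa using (hasDerivAt_id ((F x : ℝ) : ℂ)).const_sub z
  have h2 := (h1.fun_inv hz).fun_pow (k + 1)
  rw [pd_comp_hasDerivAt (i := i) hF h2]
  congr 1
  have hD : (- -1 / (z - (F x : ℂ)) ^ 2) = ((z - (F x : ℂ))⁻¹) ^ 2 := by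
    rw [neg_neg, inv_pow, one_div]
  rw [hD, Nat.add_sub_cancel]
  push_cast
  ring
end Calc

end Stmt9Aux
namespace Stmt9Aux

variable {d : ℕ}

/-- Product of iterated derivatives of `F` along the blocks in `Bs`, as a complex number. -/
noncomputable def prodC (F : (Fin d → ℝ) → ℝ) (Bs : List (List (Fin d))) :
    (Fin d → ℝ) → ℂ :=
  fun x => (Bs.map fun B => ((pdl B F x : ℝ) : ℂ)).prod

lemma prodC_nil (F : (Fin d → ℝ) → ℝ) : prodC F [] = fun _ => (1 : ℂ) := by
  funext y; simp [prodC]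

lemma prodC_cons (F : (Fin d → ℝ) → ℝ) (B : List (Fin d)) (Bs : List (List (Fin d))) :
    prodC F (B :: Bs) = fun y => ((pdl B F y : ℝ) : ℂ) * prodC F Bs y := by
  funext y; simp [prodC]

/-- The value of a single term `(c, Bs, e)`. -/
noncomputable def tval (F : (Fin d → ℝ) → ℝ) (z : ℂ)
    (t : ℕ × List (List (Fin d)) × ℕ) : (Fin d → ℝ) → ℂ :=
  fun x => (t.1 : ℂ) * prodC F t.2.1 x * ((z - (F x : ℂ))⁻¹) ^ t.2.2

/-- Formal expansion of `∂ᵢ (∏_B ∂^B F · (z-F)^{-e})` into terms. -/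
def expand (i : Fin d) : List (List (Fin d)) → ℕ → List (ℕ × List (List (Fin d)) × ℕ)
  | [], e => [(e, [[i]], e + 1)]
  | B :: Bs, e => (1, (i :: B) :: Bs, e) ::
      ((expand i Bs e).map fun t => (t.1, B :: t.2.1, t.2.2))

lemma expand_sum_lengths (i : Fin d) :
    ∀ (Bs : List (List (Fin d))) (e : ℕ), ∀ t ∈ expand i Bs e,
      (t.2.1.map List.length).sum = (Bs.map List.length).sum + 1 := by
  intro Bs
  induction Bs with
  | nil => intro e t ht; simp [expand] at ht; subst ht; simp
  | cons B Bs ih =>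
    intro e t ht
    simp only [expand, List.mem_cons, List.mem_map] at ht
    rcases ht with rfl | ⟨s, hs, rfl⟩
    · simp; ring
    · have := ih e s hs
      simp only [List.map_cons, List.sum_cons, this]
      ring

lemma expand_exp_lower (i : Fin d) :
    ∀ (Bs : List (List (Fin d))) (e c : ℕ), Bs.length + c ≤ e →
      ∀ t ∈ expand i Bs e, t.2.1.length + c ≤ t.2.2 := by
  intro Bs
  induction Bs with
  | nil =>
    intro e c hc t ht
    simp [expand] at ht; subst ht
    simp at hc ⊢
    omega
  | cons B Bs ih =>
    intro e c hc t ht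
    simp only [expand, List.mem_cons, List.mem_map] at ht
    rcases ht with rfl | ⟨s, hs, rfl⟩
    · simpa using hc
    · have h' : Bs.length + (c + 1) ≤ e := by simp at hc; omega
      have := ih e (c + 1) h' s hs
      simp only [List.length_cons]
      omega

lemma expand_exp_upper (i : Fin d) :
    ∀ (Bs : List (List (Fin d))) (e : ℕ), ∀ t ∈ expand i Bs e, t.2.2 ≤ e + 1 := by
  intro Bs
  induction Bs with
  | nil => intro e t ht; simp [expand] at ht; subst ht; simp
  | cons B Bs ih =>
    intro e t ht
    simp only [expand, List.mem_cons, List.mem_map] at ht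
    rcases ht with rfl | ⟨s, hs, rfl⟩
    · simpa using Nat.le_succ e
    · exact ih e s hs

lemma expand_blocks (i : Fin d) (L : List (Fin d)) (hiL : ∀ j ∈ L, i ≤ j) :
    ∀ (Bs : List (List (Fin d))) (e : ℕ),
      (∀ B ∈ Bs, B ≠ [] ∧ B.Pairwise (· ≤ ·) ∧ ∀ j ∈ B, j ∈ L) →
      ∀ t ∈ expand i Bs e, ∀ B ∈ t.2.1,
        B ≠ [] ∧ B.Pairwise (· ≤ ·) ∧ ∀ j ∈ B, j ∈ i :: L := by
  intro Bs
  induction Bs with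
  | nil =>
    intro e hBs t ht B hB
    simp [expand] at ht; subst ht
    simp at hB; subst hB
    refine ⟨by simp, by simp, by simp⟩
  | cons B₀ Bs ih =>
    intro e hBs t ht B hB
    simp only [expand, List.mem_cons, List.mem_map] at ht
    rcases ht with rfl | ⟨s, hs, rfl⟩
    · simp only [List.mem_cons] at hB
      rcases hB with rfl | hB
      · obtain ⟨hne, hsort, hmem⟩ := hBs B₀ List.mem_cons_self
        refine ⟨by simp, ?_, ?_⟩
        · rw [List.pairwise_cons]
          exact ⟨fun j hj => hiL j (hmem j hj), hsort⟩
        · intro j hj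
          rcases List.mem_cons.1 hj with rfl | hj
          · exact List.mem_cons_self
          · exact List.mem_cons_of_mem _ (hmem j hj)
      · obtain ⟨hne, hsort, hmem⟩ := hBs B (List.mem_cons_of_mem _ hB)
        exact ⟨hne, hsort, fun j hj => List.mem_cons_of_mem _ (hmem j hj)⟩
    · simp only [List.mem_cons] at hB
      rcases hB with rfl | hB
      · obtain ⟨hne, hsort, hmem⟩ := hBs B List.mem_cons_self
        exact ⟨hne, hsort, fun j hj => List.mem_cons_of_mem _ (hmem j hj)⟩
      · exact ih e (fun B' hB' => hBs B' (List.mem_cons_of_mem _ hB')) s hs B hB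

lemma diff_prodC {F : (Fin d → ℝ) → ℝ} (hF : ContDiff ℝ (⊤ : ℕ∞) F)
    (Bs : List (List (Fin d))) (x : Fin d → ℝ) :
    DifferentiableAt ℝ (prodC F Bs) x := by
  induction Bs with
  | nil => rw [prodC_nil]; exact differentiableAt_const _
  | cons B Bs ih =>
    rw [prodC_cons]
    exact (diff_coe (((pdl_contDiff hF B).differentiable (by simp)) x)).mul ih

lemma diff_winv {F : (Fin d → ℝ) → ℝ} (hF : ContDiff ℝ (⊤ : ℕ∞) F)
    {z : ℂ} (hz : ∀ y, z - (F y : ℂ) ≠ 0) (x : Fin d → ℝ) :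
    DifferentiableAt ℝ (fun y => (z - (F y : ℂ))⁻¹) x :=
  ((differentiableAt_const z).sub (diff_coe ((hF.differentiable (by simp)) x))).inv (hz x)

lemma diff_tval {F : (Fin d → ℝ) → ℝ} (hF : ContDiff ℝ (⊤ : ℕ∞) F)
    {z : ℂ} (hz : ∀ y, z - (F y : ℂ) ≠ 0) (t : ℕ × List (List (Fin d)) × ℕ)
    (x : Fin d → ℝ) : DifferentiableAt ℝ (tval F z t) x := by
  unfold tval
  exact (((diff_prodC hF t.2.1 x).const_mul _).mul ((diff_winv hF hz x).pow t.2.2))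

lemma expand_identity {F : (Fin d → ℝ) → ℝ} (hF : ContDiff ℝ (⊤ : ℕ∞) F)
    {z : ℂ} (hz : ∀ y, z - (F y : ℂ) ≠ 0) (i : Fin d) :
    ∀ (Bs : List (List (Fin d))) (e : ℕ), 1 ≤ e → ∀ x,
      pd i (fun y => prodC F Bs y * ((z - (F y : ℂ))⁻¹) ^ e) x
        = ((expand i Bs e).map fun t => tval F z t x).sum := by
  intro Bs
  induction Bs with
  | nil =>
    intro e he x
    obtain ⟨k, rfl⟩ : ∃ k, e = k + 1 := ⟨e - 1, by omega⟩
    have h1 : pd i (fun y => prodC F [] y * ((z - (F y : ℂ))⁻¹) ^ (k + 1)) x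
        = pd i (fun y => ((z - (F y : ℂ))⁻¹) ^ (k + 1)) x := by
      congr 1
      funext y
      rw [prodC_nil]
      simp
    rw [h1, pd_invpow ((hF.differentiable (by simp)) x) (hz x) k]
    simp only [expand, List.map_cons, List.map_nil, List.sum_cons, List.sum_nil,
      add_zero, tval]
    rw [prodC_cons, prodC_nil]
    simp only [pdl_cons, pdl_nil]
    push_cast
    ring
  | cons B Bs ih =>
    intro e he x
    have hpdlB : DifferentiableAt ℝ (fun y => ((pdl B F y : ℝ) : ℂ)) x :=
      diff_coe (((pdl_contDiff hF B).differentiable (by simp)) x)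
    have hrest : DifferentiableAt ℝ (fun y => prodC F Bs y * ((z - (F y : ℂ))⁻¹) ^ e) x :=
      (diff_prodC hF Bs x).mul ((diff_winv hF hz x).pow e)
    have h1 : pd i (fun y => prodC F (B :: Bs) y * ((z - (F y : ℂ))⁻¹) ^ e) x
        = pd i (fun y => ((pdl B F y : ℝ) : ℂ) *
            (prodC F Bs y * ((z - (F y : ℂ))⁻¹) ^ e)) x := by
      congr 1
      funext y
      rw [prodC_cons]
      ring
    rw [h1, pd_mul hpdlB hrest, pd_ofReal (((pdl_contDiff hF B).differentiable (by simp)) x),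
      ih e he x]
    have h3 : ∀ t : ℕ × List (List (Fin d)) × ℕ,
        tval F z (t.1, B :: t.2.1, t.2.2) x = ((pdl B F x : ℝ) : ℂ) * tval F z t x := by
      intro t
      simp only [tval, prodC_cons]
      ring
    simp only [expand, List.map_cons, List.sum_cons, List.map_map]
    have h4 : ((expand i Bs e).map
          ((fun t => tval F z t x) ∘ fun t => (t.1, B :: t.2.1, t.2.2))).sum
        = ((pdl B F x : ℝ) : ℂ) * ((expand i Bs e).map fun t => tval F z t x).sum := by
      rw [← List.sum_map_mul_left]
      congr 1
      apply List.map_congr_left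
      intro t ht
      exact h3 t
    rw [h4]
    simp only [tval, prodC_cons, pdl_cons]
    push_cast
    ring

lemma tval_smul (F : (Fin d → ℝ) → ℝ) (z : ℂ) (a : ℕ) (s : ℕ × List (List (Fin d)) × ℕ)
    (x : Fin d → ℝ) :
    tval F z (a * s.1, s.2) x = (a : ℂ) * tval F z s x := by
  simp only [tval]
  push_cast
  ring

theorem struct (L : List (Fin d)) (hL : L.Pairwise (· ≤ ·)) :
    ∃ T : List (ℕ × List (List (Fin d)) × ℕ),
      (∀ t ∈ T, (t.2.1.map List.length).sum = L.length
        ∧ t.2.1.length + 1 ≤ t.2.2 ∧ t.2.2 ≤ L.length + 1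
        ∧ ∀ B ∈ t.2.1, B ≠ [] ∧ B.Pairwise (· ≤ ·) ∧ ∀ j ∈ B, j ∈ L)
      ∧ ∀ (F : (Fin d → ℝ) → ℝ), ContDiff ℝ (⊤ : ℕ∞) F → ∀ (z : ℂ), (∀ y, z - (F y : ℂ) ≠ 0) →
          ∀ x, pdl L (fun y => (z - (F y : ℂ))⁻¹) x
            = ((T.map fun t => tval F z t x)).sum := by
  induction L with
  | nil =>
    refine ⟨[(1, [], 1)], ?_, ?_⟩
    · intro t ht; simp at ht; subst ht; simp
    · intro F hF z hz x
      simp [tval, prodC_nil, pdl_nil]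
  | cons i L ih =>
    rw [List.pairwise_cons] at hL
    obtain ⟨T, hTc, hTi⟩ := ih hL.2
    refine ⟨T.flatMap fun t => (expand i t.2.1 t.2.2).map fun s => (t.1 * s.1, s.2), ?_, ?_⟩
    · intro t' ht'
      rw [List.mem_flatMap] at ht'
      obtain ⟨t, htT, ht''⟩ := ht'
      rw [List.mem_map] at ht''
      obtain ⟨s, hs, rfl⟩ := ht''
      obtain ⟨hsum, hlow, hup, hblocks⟩ := hTc t htT
      have he1 : 1 ≤ t.2.2 := le_trans (Nat.le_add_left 1 _) hlow
      refine ⟨?_, ?_, ?_, ?_⟩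
      · rw [expand_sum_lengths i t.2.1 t.2.2 s hs, hsum]
        simp
      · exact expand_exp_lower i t.2.1 t.2.2 1 hlow s hs
      · have := expand_exp_upper i t.2.1 t.2.2 s hs
        simp only [List.length_cons]
        omega
      · exact expand_blocks i L hL.1 t.2.1 t.2.2 hblocks s hs
    · intro F hF z hz x
      have hfun : pdl L (fun y => (z - (F y : ℂ))⁻¹)
          = fun y => (T.map fun t => tval F z t y).sum :=
        funext (hTi F hF z hz)
      rw [pdl_cons, hfun,
        pd_list_sum T (fun t y => tval F z t y) (fun t _ => diff_tval hF hz t x)]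
      rw [List.map_flatMap, List.flatMap_def, List.sum_flatten, List.map_map]
      congr 1
      apply List.map_congr_left
      intro t htT
      obtain ⟨hsum, hlow, hup, hblocks⟩ := hTc t htT
      have he1 : 1 ≤ t.2.2 := le_trans (Nat.le_add_left 1 _) hlow
      have h5 : pd i (tval F z t) x
          = (t.1 : ℂ) * pd i (fun y => prodC F t.2.1 y * ((z - (F y : ℂ))⁻¹) ^ t.2.2) x := by
        have : tval F z t = fun y => (t.1 : ℂ) *
            (prodC F t.2.1 y * ((z - (F y : ℂ))⁻¹) ^ t.2.2) := by
          funext y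
          simp only [tval]
          ring
        rw [this, pd_const_mul (B := fun y => prodC F t.2.1 y * ((z - (F y : ℂ))⁻¹) ^ t.2.2) _ ((diff_prodC hF t.2.1 x).mul ((diff_winv hF hz x).pow _))]
      rw [h5, expand_identity hF hz i t.2.1 t.2.2 he1 x,
        ← List.sum_map_mul_left]
      simp only [Function.comp, List.map_map]
      congr 1
      apply List.map_congr_left
      intro s hs
      exact (tval_smul F z t.1 s x).symm

end Stmt9Aux
namespace Stmt9Aux

variable {d : ℕ}

lemma prodC_eq (F : (Fin d → ℝ) → ℝ) (Bs : List (List (Fin d))) (x : Fin d → ℝ) :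
    prodC F Bs x = (((Bs.map fun B => pdl B F x).prod : ℝ) : ℂ) := by
  induction Bs with
  | nil => simp [prodC_nil]
  | cons B Bs ih =>
    rw [prodC_cons]
    simp only [List.map_cons, List.prod_cons, Complex.ofReal_mul, ih]

lemma pow_inv_le {M : ℝ} (hM : 1 ≤ M) {k e : ℕ} (h : k + 1 ≤ e) :
    M ^ k * (M⁻¹) ^ e ≤ M⁻¹ := by
  have hM0 : 0 < M := lt_of_lt_of_le one_pos hM
  rw [inv_pow, ← div_eq_mul_inv, inv_eq_one_div, div_le_div_iff₀ (by positivity) hM0]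
  calc M ^ k * M = M ^ (k + 1) := (pow_succ M k).symm
    _ ≤ M ^ e := pow_le_pow_right₀ hM h
    _ = 1 * M ^ e := by ring

lemma rpow_neg_eq (a : ℝ) (ha : 0 ≤ a) (n : ℕ) :
    a ^ (-1 - (n : ℝ)) = (a⁻¹) ^ (n + 1) := by
  have h1 : (-1 - (n : ℝ)) = -(((n + 1 : ℕ) : ℝ)) := by push_cast; ring
  rw [h1, Real.rpow_neg ha, Real.rpow_natCast, inv_pow]

lemma list_sum_est {β γ : Type*} (P : γ → Prop) (v : γ → β → ℂ) (u : γ → ℝ) :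
    ∀ T : List β, (∀ t ∈ T, ∃ C > 0, ∀ p, P p → ‖v p t‖ ≤ C * u p) →
      ∃ C ≥ 0, ∀ p, P p → ‖(T.map fun t => v p t).sum‖ ≤ C * u p := by
  intro T
  induction T with
  | nil => exact fun _ => ⟨0, le_refl 0, fun p hp => by simp⟩
  | cons a T ih =>
    intro h
    obtain ⟨C₁, hC₁, h₁⟩ := h a (List.mem_cons_self)
    obtain ⟨C₂, hC₂, h₂⟩ := ih fun t ht => h t (List.mem_cons_of_mem _ ht)
    refine ⟨C₁ + C₂, by positivity, fun p hp => ?_⟩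
    simp only [List.map_cons, List.sum_cons]
    calc ‖v p a + (T.map fun t => v p t).sum‖
        ≤ ‖v p a‖ + ‖(T.map fun t => v p t).sum‖ := norm_add_le _ _
      _ ≤ C₁ * u p + C₂ * u p := add_le_add (h₁ p hp) (h₂ p hp)
      _ = (C₁ + C₂) * u p := by ring

lemma prod_bound {δ : ℝ} (m f : ℝ → (Fin d → ℝ) → ℝ)
    (hm_one : ∀ N : ℝ, 1 ≤ N → ∀ x, 1 ≤ m N x)
    (hsymb : ∀ B : List (Fin d), B.Pairwise (· ≤ ·) →
      ∃ C > 0, ∀ N : ℝ, 1 ≤ N → ∀ x,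
        |pdl B (f N) x| ≤ C * N ^ (δ * B.length) * m N x) :
    ∀ Bs : List (List (Fin d)), (∀ B ∈ Bs, B.Pairwise (· ≤ ·)) →
      ∃ C > 0, ∀ N : ℝ, 1 ≤ N → ∀ x,
        |(Bs.map fun B => pdl B (f N) x).prod|
          ≤ C * N ^ (δ * (((Bs.map List.length).sum : ℕ) : ℝ)) * (m N x) ^ Bs.length := by
  intro Bs
  induction Bs with
  | nil =>
    intro _
    exact ⟨1, one_pos, fun N hN x => by simp⟩
  | cons B Bs ih =>
    intro hBs
    obtain ⟨C₁, hC₁, h₁⟩ := hsymb B (hBs B (List.mem_cons_self))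
    obtain ⟨C₂, hC₂, h₂⟩ := ih fun B' h => hBs _ (List.mem_cons_of_mem _ h)
    refine ⟨C₁ * C₂, by positivity, fun N hN x => ?_⟩
    have hN0 : (0 : ℝ) < N := lt_of_lt_of_le one_pos hN
    have hm0 : (0 : ℝ) ≤ m N x := le_trans zero_le_one (hm_one N hN x)
    have hexp : N ^ (δ * (((B.length + (Bs.map List.length).sum : ℕ) : ℕ) : ℝ))
        = N ^ (δ * (B.length : ℝ)) * N ^ (δ * (((Bs.map List.length).sum : ℕ) : ℝ)) := by
      rw [← Real.rpow_add hN0]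
      congr 1
      push_cast
      ring
    simp only [List.map_cons, List.prod_cons, List.sum_cons, List.length_cons, abs_mul]
    calc |pdl B (f N) x| * |(Bs.map fun B => pdl B (f N) x).prod|
        ≤ (C₁ * N ^ (δ * (B.length : ℝ)) * m N x) *
          (C₂ * N ^ (δ * (((Bs.map List.length).sum : ℕ) : ℝ)) * (m N x) ^ Bs.length) := by
          apply mul_le_mul (h₁ N hN x) (h₂ N hN x) (abs_nonneg _)
          positivity
      _ = C₁ * C₂ * (N ^ (δ * (B.length : ℝ)) *
            N ^ (δ * (((Bs.map List.length).sum : ℕ) : ℝ))) * (m N x) ^ (Bs.length + 1) := by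
          ring
      _ = C₁ * C₂ * N ^ (δ * (((B.length + (Bs.map List.length).sum : ℕ) : ℕ) : ℝ)) *
            (m N x) ^ (Bs.length + 1) := by rw [hexp]

end Stmt9Aux

/-- Derivative estimates on the resolvent symbol `s₁(z,x) = (z − f_N(x))⁻¹`: for `f ∈ S_δ(m)`
nonnegative and elliptic, `s₁(z,·) ∈ S_δ(m⁻¹)` with constants `|Im z|^{−1−|α|}`. -/
theorem stmt9 (d : ℕ) (δ : ℝ) (hδ0 : 0 ≤ δ) (hδ1 : δ < 1 / 2)
    (m : ℝ → (Fin d → ℝ) → ℝ)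
    (hm_smooth : ∀ N : ℝ, 1 ≤ N → ContDiff ℝ (⊤ : ℕ∞) (m N))
    (hm_one : ∀ N : ℝ, 1 ≤ N → ∀ x, 1 ≤ m N x)
    (hm_ord : ∃ C > 0, ∃ M₀ > 0, ∀ N : ℝ, 1 ≤ N → ∀ x y,
      m N x ≤ C * (1 + N ^ δ * ‖x - y‖) ^ M₀ * m N y)
    (f : ℝ → (Fin d → ℝ) → ℝ)
    (hf_smooth : ∀ N : ℝ, 1 ≤ N → ContDiff ℝ (⊤ : ℕ∞) (f N))
    (hf_symb : ∀ α : Fin d → ℕ, ∃ C > 0, ∀ N : ℝ, 1 ≤ N → ∀ x,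
      |md α (f N) x| ≤ C * N ^ (δ * (∑ i, α i)) * m N x)
    (hf_nonneg : ∀ N : ℝ, 1 ≤ N → ∀ x, 0 ≤ f N x)
    (C₀ : ℝ) (hC₀ : 0 < C₀)
    (hell : ∀ N : ℝ, 1 ≤ N → ∀ x, m N x / C₀ - C₀ ≤ f N x) :
    ∀ R > 0, ∀ α : Fin d → ℕ, ∃ C > 0, ∀ N : ℝ, 1 ≤ N → ∀ x : Fin d → ℝ, ∀ z : ℂ,
      |z.re| ≤ R → 0 < |z.im| → |z.im| ≤ 1 →
      ‖md α (fun y => (z - (f N y : ℂ))⁻¹) x‖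
        ≤ C * |z.im| ^ (-1 - (∑ i, α i : ℝ)) * N ^ (δ * (∑ i, α i)) * (m N x)⁻¹ := by
  intro R hR α
  classical
  obtain ⟨T, hTc, hTi⟩ := Stmt9Aux.struct (Stmt9Aux.bigL α) (Stmt9Aux.bigL_sorted α)
  -- estimates for sorted blocks
  have hsymbB : ∀ B : List (Fin d), B.Pairwise (· ≤ ·) → ∃ C > 0, ∀ N : ℝ, 1 ≤ N → ∀ x,
      |Stmt9Aux.pdl B (f N) x| ≤ C * N ^ (δ * (B.length : ℝ)) * m N x := by
    intro B hB
    obtain ⟨C, hC, h⟩ := hf_symb fun j => B.count j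
    refine ⟨C, hC, fun N hN x => ?_⟩
    have hsc : (((∑ i, B.count i : ℕ)) : ℝ) = (B.length : ℝ) := by
      rw [Stmt9Aux.sum_count]
    have h2 := h N hN x
    rw [hsc] at h2
    rwa [Stmt9Aux.pdl_eq_md_of_sorted B hB]
  have hprod := Stmt9Aux.prod_bound m f hm_one hsymbB
  -- the constant K for the resolvent bound
  set K := max (C₀ * (R + C₀ + 1)) 1 with hKdef
  have hK1 : (1 : ℝ) ≤ K := le_max_right _ _
  have hK0 : (0 : ℝ) < K := lt_of_lt_of_le one_pos hK1
  -- resolvent bound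
  have hres : ∀ N : ℝ, 1 ≤ N → ∀ (x : Fin d → ℝ) (z : ℂ),
      |z.re| ≤ R → 0 < |z.im| → |z.im| ≤ 1 →
      ‖(z - (f N x : ℂ))⁻¹‖ ≤ K * (|z.im|⁻¹ * (m N x)⁻¹) := by
    intro N hN x z hre him0 him1
    set F := f N x with hF
    set w := z - (F : ℂ) with hw
    have him : w.im = z.im := by simp [hw, Complex.sub_im]
    have hwn : |z.im| ≤ ‖w‖ := by
      rw [← him]
      exact Complex.abs_im_le_norm w
    have hw0 : 0 < ‖w‖ := lt_of_lt_of_le him0 hwn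
    have hwre : w.re = z.re - F := by simp [hw]
    have hwre2 : |w.re| ≤ ‖w‖ := by
      exact Complex.abs_re_le_norm w
    have hF_le : F ≤ R + ‖w‖ := by
      have h1 : F = z.re - w.re := by rw [hwre]; ring
      have h2 := le_abs_self z.re
      have h3 := neg_abs_le w.re
      linarith
    have hm1 : 1 ≤ m N x := hm_one N hN x
    have hmle : m N x ≤ (R + ‖w‖ + C₀) * C₀ := by
      have h5 : m N x ≤ (F + C₀) * C₀ :=
        (div_le_iff₀ hC₀).mp (by linarith [hell N hN x])
      have h6 : (F + C₀) * C₀ ≤ (R + ‖w‖ + C₀) * C₀ :=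
        mul_le_mul_of_nonneg_right (by linarith) hC₀.le
      linarith
    have hkey : m N x * |z.im| ≤ K * ‖w‖ := by
      calc m N x * |z.im| ≤ ((R + ‖w‖ + C₀) * C₀) * |z.im| :=
            mul_le_mul_of_nonneg_right hmle (abs_nonneg _)
        _ = C₀ * (R + C₀) * |z.im| + C₀ * ‖w‖ * |z.im| := by ring
        _ ≤ C₀ * (R + C₀) * ‖w‖ + C₀ * ‖w‖ * 1 :=
            add_le_add (mul_le_mul_of_nonneg_left hwn (by positivity))
              (mul_le_mul_of_nonneg_left him1 (by positivity))
        _ = C₀ * (R + C₀ + 1) * ‖w‖ := by ring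
        _ ≤ K * ‖w‖ := mul_le_mul_of_nonneg_right (le_max_left _ _) (norm_nonneg _)
    rw [norm_inv]
    have hrw : K * (|z.im|⁻¹ * (m N x)⁻¹) = K / (|z.im| * m N x) := by
      field_simp
    rw [hrw, inv_eq_one_div, div_le_div_iff₀ hw0 (by positivity)]
    calc 1 * (|z.im| * m N x) = m N x * |z.im| := by ring
      _ ≤ K * ‖w‖ := hkey
  -- per-term estimate
  have hterm : ∀ t ∈ T, ∃ C > 0, ∀ p : ℝ × (Fin d → ℝ) × ℂ,
      (1 ≤ p.1 ∧ |p.2.2.re| ≤ R ∧ 0 < |p.2.2.im| ∧ |p.2.2.im| ≤ 1) →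
      ‖Stmt9Aux.tval (f p.1) p.2.2 t p.2.1‖
        ≤ C * (|p.2.2.im| ^ (-1 - ((∑ i, α i : ℕ) : ℝ)) *
            p.1 ^ (δ * ((∑ i, α i : ℕ) : ℝ)) * (m p.1 p.2.1)⁻¹) := by
    intro t htT
    obtain ⟨hsum_len, hlow, hup, hblocks⟩ := hTc t htT
    obtain ⟨Cp, hCp, hp⟩ := hprod t.2.1 fun B hB => (hblocks B hB).2.1
    refine ⟨((t.1 : ℝ) + 1) * Cp * K ^ ((∑ i, α i) + 1), by positivity, ?_⟩
    rintro ⟨N, x, z⟩ ⟨hN, hre, him0, him1⟩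
    have hN0 : (0 : ℝ) < N := lt_of_lt_of_le one_pos hN
    have hm1 : 1 ≤ m N x := hm_one N hN x
    have hm0 : (0 : ℝ) < m N x := lt_of_lt_of_le one_pos hm1
    have hW := hres N hN x z hre him0 him1
    have hlen : (t.2.1.map List.length).sum = ∑ i, α i := by
      rw [hsum_len, Stmt9Aux.bigL_length]
    have he_le : t.2.2 ≤ (∑ i, α i) + 1 := by
      have := hup
      rwa [Stmt9Aux.bigL_length] at this
    have h1i : 1 ≤ |z.im|⁻¹ := (one_le_inv₀ him0).mpr him1
    have hprodle : |(t.2.1.map fun B => Stmt9Aux.pdl B (f N) x).prod|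
        ≤ Cp * N ^ (δ * (((∑ i, α i : ℕ)) : ℝ)) * (m N x) ^ t.2.1.length := by
      have := hp N hN x
      rwa [hlen] at this
    have hnorm : ‖Stmt9Aux.tval (f N) z t x‖
        = (t.1 : ℝ) * |(t.2.1.map fun B => Stmt9Aux.pdl B (f N) x).prod| *
          ‖(z - (f N x : ℂ))⁻¹‖ ^ t.2.2 := by
      simp only [Stmt9Aux.tval]
      rw [Stmt9Aux.prodC_eq, norm_mul, norm_mul, norm_pow, Complex.norm_natCast,
        Complex.norm_real, Real.norm_eq_abs]
    rw [hnorm]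
    calc (t.1 : ℝ) * |(t.2.1.map fun B => Stmt9Aux.pdl B (f N) x).prod| *
          ‖(z - (f N x : ℂ))⁻¹‖ ^ t.2.2
        ≤ (t.1 : ℝ) * (Cp * N ^ (δ * (((∑ i, α i : ℕ)) : ℝ)) * (m N x) ^ t.2.1.length) *
          (K * (|z.im|⁻¹ * (m N x)⁻¹)) ^ t.2.2 := by
          apply mul_le_mul
          · exact mul_le_mul_of_nonneg_left hprodle (Nat.cast_nonneg _)
          · exact pow_le_pow_left₀ (norm_nonneg _) hW _
          · positivity
          · positivity
      _ = ((t.1 : ℝ) * Cp) * K ^ t.2.2 * (|z.im|⁻¹) ^ t.2.2 *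
            (N ^ (δ * (((∑ i, α i : ℕ)) : ℝ)) *
              ((m N x) ^ t.2.1.length * ((m N x)⁻¹) ^ t.2.2)) := by
          rw [mul_pow, mul_pow]
          ring
      _ ≤ (((t.1 : ℝ) + 1) * Cp) * K ^ ((∑ i, α i) + 1) * (|z.im|⁻¹) ^ ((∑ i, α i) + 1) *
            (N ^ (δ * (((∑ i, α i : ℕ)) : ℝ)) * (m N x)⁻¹) := by
          have hKpow : K ^ t.2.2 ≤ K ^ ((∑ i, α i) + 1) := pow_le_pow_right₀ hK1 he_le
          have hIpow : (|z.im|⁻¹) ^ t.2.2 ≤ (|z.im|⁻¹) ^ ((∑ i, α i) + 1) :=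
            pow_le_pow_right₀ h1i he_le
          have hmpow : (m N x) ^ t.2.1.length * ((m N x)⁻¹) ^ t.2.2 ≤ (m N x)⁻¹ :=
            Stmt9Aux.pow_inv_le hm1 hlow
          have ht1 : (t.1 : ℝ) * Cp ≤ ((t.1 : ℝ) + 1) * Cp :=
            mul_le_mul_of_nonneg_right (by linarith) hCp.le
          have hNpow : (0 : ℝ) ≤ N ^ (δ * (((∑ i, α i : ℕ)) : ℝ)) :=
            Real.rpow_nonneg hN0.le _
          apply mul_le_mul
          · apply mul_le_mul
            · exact mul_le_mul ht1 hKpow (by positivity) (by positivity)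
            · exact hIpow
            · positivity
            · positivity
          · exact mul_le_mul_of_nonneg_left hmpow hNpow
          · positivity
          · positivity
      _ = (((t.1 : ℝ) + 1) * Cp * K ^ ((∑ i, α i) + 1)) *
            (|z.im| ^ (-1 - ((∑ i, α i : ℕ) : ℝ)) *
              N ^ (δ * ((∑ i, α i : ℕ) : ℝ)) * (m N x)⁻¹) := by
          rw [Stmt9Aux.rpow_neg_eq |z.im| (abs_nonneg _) (∑ i, α i)]
          ring
  obtain ⟨C, hC0, hCb⟩ := Stmt9Aux.list_sum_est
    (fun p : ℝ × (Fin d → ℝ) × ℂ => 1 ≤ p.1 ∧ |p.2.2.re| ≤ R ∧ 0 < |p.2.2.im| ∧ |p.2.2.im| ≤ 1)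
    (fun p t => Stmt9Aux.tval (f p.1) p.2.2 t p.2.1)
    (fun p => |p.2.2.im| ^ (-1 - ((∑ i, α i : ℕ) : ℝ)) *
      p.1 ^ (δ * ((∑ i, α i : ℕ) : ℝ)) * (m p.1 p.2.1)⁻¹)
    T hterm
  refine ⟨C + 1, by positivity, ?_⟩
  intro N hN x z hre him0 him1
  have hN0 : (0 : ℝ) < N := lt_of_lt_of_le one_pos hN
  have hm1 : 1 ≤ m N x := hm_one N hN x
  have hz : ∀ y, z - (f N y : ℂ) ≠ 0 := by
    intro y hy
    have h2 : z.im = 0 := by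
      have h3 := congrArg Complex.im hy
      simpa [Complex.sub_im] using h3
    rw [h2] at him0
    simp at him0
  have hcast : (∑ i, ((α i : ℕ) : ℝ)) = ((∑ i, α i : ℕ) : ℝ) := by
    push_cast
    ring
  rw [Stmt9Aux.md_eq_pdl α, hTi (f N) (hf_smooth N hN) z hz x]
  have hgl := hCb (N, x, z) ⟨hN, hre, him0, him1⟩
  have hu0 : (0 : ℝ) ≤ |z.im| ^ (-1 - ((∑ i, α i : ℕ) : ℝ)) *
      N ^ (δ * ((∑ i, α i : ℕ) : ℝ)) * (m N x)⁻¹ := by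
    apply mul_nonneg (mul_nonneg (Real.rpow_nonneg (abs_nonneg _) _)
      (Real.rpow_nonneg hN0.le _))
    exact inv_nonneg.mpr (by linarith)
  calc ‖(T.map fun t => Stmt9Aux.tval (f N) z t x).sum‖
      ≤ C * (|z.im| ^ (-1 - ((∑ i, α i : ℕ) : ℝ)) *
          N ^ (δ * ((∑ i, α i : ℕ) : ℝ)) * (m N x)⁻¹) := hgl
    _ ≤ (C + 1) * (|z.im| ^ (-1 - ((∑ i, α i : ℕ) : ℝ)) *
          N ^ (δ * ((∑ i, α i : ℕ) : ℝ)) * (m N x)⁻¹) :=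
        mul_le_mul_of_nonneg_right (by linarith) hu0
    _ = (C + 1) * |z.im| ^ (-1 - (∑ i, (α i : ℝ))) *
          N ^ (δ * ((∑ i, α i : ℕ) : ℝ)) * (m N x)⁻¹ := by
        rw [hcast]
        ring
end

section
/- For every M ∈ ℕ there exists C_M > 0 such that for all real N ≥ 1 and all ε > 0: ∫_0^{ε/2} z^{2M} e^{N(z − ε/2)² − Nε²/2} dz ≤ C_M N^{−M}. -/
open Real MeasureTheory

lemma pow_le_factorial_mul_exp (M : ℕ) {x : ℝ} (hx : 0 ≤ x) :
    x ^ M ≤ (M.factorial : ℝ) * Real.exp x := by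
  have h := Real.sum_le_exp_of_nonneg hx (M + 1)
  have hsingle : x ^ M / M.factorial ≤ ∑ i ∈ Finset.range (M + 1), x ^ i / i.factorial := by
    refine Finset.single_le_sum (f := fun i => x ^ i / (i.factorial : ℝ)) ?_ ?_
    · intro i _; positivity
    · simp
  have hfac : (0 : ℝ) < M.factorial := by positivity
  calc x ^ M = (x ^ M / M.factorial) * M.factorial := by field_simp
    _ ≤ Real.exp x * M.factorial := by
        exact mul_le_mul_of_nonneg_right (hsingle.trans h) hfac.le
    _ = (M.factorial : ℝ) * Real.exp x := mul_comm _ _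

/-- The key integral estimate, uniform in the off-diagonal parameter `ε`, controlling the
contour-deformation error terms in the Bargmann-space Toeplitz kernel computation:
`∫_0^{ε/2} z^{2M} e^{N(z − ε/2)² − Nε²/2} dz ≤ C_M N^{−M}`. -/
theorem stmt13 (M : ℕ) :
    ∃ C > 0, ∀ N : ℝ, 1 ≤ N → ∀ ε : ℝ, 0 < ε →
      (∫ z in (0 : ℝ)..(ε / 2), z ^ (2 * M) * Real.exp (N * (z - ε / 2) ^ 2 - N * ε ^ 2 / 2))
        ≤ C * N ^ (-(M : ℝ)) := by
  refine ⟨(M.factorial : ℝ) * 2 ^ M * Real.sqrt (2 * Real.pi), by positivity, ?_⟩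
  intro N hN ε hε
  have hN0 : (0 : ℝ) < N := lt_of_lt_of_le one_pos hN
  have hε2 : (0 : ℝ) ≤ ε / 2 := by linarith
  set c : ℝ := (M.factorial : ℝ) * 2 ^ M * N ^ (-(M : ℝ)) with hc
  have hc0 : 0 < c := by
    have : (0 : ℝ) < N ^ (-(M : ℝ)) := Real.rpow_pos_of_pos hN0 _
    positivity
  -- pointwise bound on [0, ε/2]
  have hpt : ∀ z ∈ Set.Icc (0 : ℝ) (ε / 2),
      z ^ (2 * M) * Real.exp (N * (z - ε / 2) ^ 2 - N * ε ^ 2 / 2)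
        ≤ c * Real.exp (-(1 / 2) * z ^ 2) := by
    rintro z ⟨hz0, hz1⟩
    have hexp1 : N * (z - ε / 2) ^ 2 - N * ε ^ 2 / 2 ≤ -(N * z ^ 2) := by
      nlinarith [mul_nonneg hz0 (by linarith : 0 ≤ ε - 2 * z), sq_nonneg ε, hN0.le]
    have h1 : z ^ (2 * M) * Real.exp (N * (z - ε / 2) ^ 2 - N * ε ^ 2 / 2)
        ≤ z ^ (2 * M) * Real.exp (-(N * z ^ 2)) := by
      exact mul_le_mul_of_nonneg_left (Real.exp_le_exp.mpr hexp1) (by positivity)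
    refine h1.trans ?_
    -- z^(2M) ≤ M! * (2/N)^M * exp (N z²/2)
    have hkey : (N * z ^ 2 / 2) ^ M ≤ (M.factorial : ℝ) * Real.exp (N * z ^ 2 / 2) :=
      pow_le_factorial_mul_exp M (by positivity)
    have hz2M : z ^ (2 * M) = (z ^ 2) ^ M := by rw [pow_mul]
    have h2 : z ^ (2 * M) ≤ (M.factorial : ℝ) * (2 / N) ^ M * Real.exp (N * z ^ 2 / 2) := by
      rw [hz2M]
      have : (z ^ 2) ^ M = (N * z ^ 2 / 2) ^ M * (2 / N) ^ M := by
        rw [← mul_pow]; congr 1; field_simp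
      rw [this]
      calc (N * z ^ 2 / 2) ^ M * (2 / N) ^ M
          ≤ ((M.factorial : ℝ) * Real.exp (N * z ^ 2 / 2)) * (2 / N) ^ M := by
            exact mul_le_mul_of_nonneg_right hkey (by positivity)
        _ = (M.factorial : ℝ) * (2 / N) ^ M * Real.exp (N * z ^ 2 / 2) := by ring
    have h3 : z ^ (2 * M) * Real.exp (-(N * z ^ 2))
        ≤ (M.factorial : ℝ) * (2 / N) ^ M * Real.exp (-(N * z ^ 2 / 2)) := by
      have := mul_le_mul_of_nonneg_right h2 (Real.exp_pos (-(N * z ^ 2))).le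
      calc z ^ (2 * M) * Real.exp (-(N * z ^ 2))
          ≤ (M.factorial : ℝ) * (2 / N) ^ M * Real.exp (N * z ^ 2 / 2)
              * Real.exp (-(N * z ^ 2)) := this
        _ = (M.factorial : ℝ) * (2 / N) ^ M * Real.exp (-(N * z ^ 2 / 2)) := by
            rw [mul_assoc, ← Real.exp_add,
              show N * z ^ 2 / 2 + -(N * z ^ 2) = -(N * z ^ 2 / 2) by ring]
    refine h3.trans ?_
    have hcoef : (M.factorial : ℝ) * (2 / N) ^ M = c := by
      rw [hc]
      rw [Real.rpow_neg hN0.le, Real.rpow_natCast, div_pow]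
      field_simp
    rw [hcoef]
    refine mul_le_mul_of_nonneg_left (Real.exp_le_exp.mpr ?_) hc0.le
    nlinarith [sq_nonneg z, hN]
  -- integrability
  have hint1 : IntervalIntegrable
      (fun z => z ^ (2 * M) * Real.exp (N * (z - ε / 2) ^ 2 - N * ε ^ 2 / 2))
      volume 0 (ε / 2) := by
    apply Continuous.intervalIntegrable; continuity
  have hgauss : Integrable (fun z : ℝ => Real.exp (-(1 / 2) * z ^ 2)) volume := by
    simpa using integrable_exp_neg_mul_sq (by norm_num : (0:ℝ) < 1/2)
  have hint2 : IntervalIntegrable (fun z : ℝ => c * Real.exp (-(1 / 2) * z ^ 2))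
      volume 0 (ε / 2) := (hgauss.const_mul c).intervalIntegrable
  have hmono := intervalIntegral.integral_mono_on hε2 hint1 hint2 hpt
  refine hmono.trans ?_
  -- ∫_0^{ε/2} c exp(-z²/2) ≤ c √(2π)
  have h4 : (∫ z in (0 : ℝ)..(ε / 2), c * Real.exp (-(1 / 2) * z ^ 2))
      ≤ c * Real.sqrt (2 * Real.pi) := by
    rw [intervalIntegral.integral_const_mul]
    refine mul_le_mul_of_nonneg_left ?_ hc0.le
    have hle : (∫ z in (0 : ℝ)..(ε / 2), Real.exp (-(1 / 2) * z ^ 2))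
        ≤ ∫ z : ℝ, Real.exp (-(1 / 2) * z ^ 2) := by
      rw [intervalIntegral.integral_of_le hε2]
      exact setIntegral_le_integral hgauss
        (Filter.Eventually.of_forall fun z => (Real.exp_pos _).le)
    refine hle.trans ?_
    rw [integral_gaussian (1 / 2 : ℝ), show Real.pi / (1 / 2) = 2 * Real.pi by ring]
  refine h4.trans ?_
  rw [hc]; ring_nf; rfl
end
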